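/- Rules (7) and (8) are inverses: if S is a face sequence of type 7 and S′ is the result of applying rule (7) to S, then S′ is a face sequence of type 8 and applying rule (8) to S′ returns S; conversely, if T is a face sequence of type 8 and T′ is the result of applying rule (8) to T, then T′ is of type 7 and applying rule (7) to T′ returns T. -/

import Mathlib

set_option linter.unusedVariables false

/-- The alphabet `{0, 1, ∗}` for face sequences. -/
inductive Letter : Type
  | zero
  | one
  | star
  deriving DecidableEq

/-- A sequence of length `n` over the alphabet `{0, 1, ∗}`. -/
abbrev FSeq (n : ℕ) := Fin n → Letter

/-- `S(1)`, the number of `1`'s in `S`. -/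
def count1 {n : ℕ} (S : FSeq n) : ℕ := (Finset.univ.filter fun i => S i = Letter.one).card

/-- `S(0)`, the number of `0`'s in `S`. -/
def count0 {n : ℕ} (S : FSeq n) : ℕ := (Finset.univ.filter fun i => S i = Letter.zero).card

/-- The number of `∗`'s in `S`. -/
def countStar {n : ℕ} (S : FSeq n) : ℕ := (Finset.univ.filter fun i => S i = Letter.star).card

/-- A face sequence: either no `∗` and exactly `k` ones, or at most `k-1` ones and
(#ones) + (#stars) ≥ `k+1`. -/
def FaceSeq {n : ℕ} (k : ℕ) (S : FSeq n) : Prop :=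
  (countStar S = 0 ∧ count1 S = k) ∨ (count1 S + 1 ≤ k ∧ k + 1 ≤ count1 S + countStar S)

/-- `v₀`, the sequence of `k` ones followed by `n - k` zeros. -/
def v0seq (n k : ℕ) : FSeq n := fun i => if (i : ℕ) < k then Letter.one else Letter.zero

/-- `S` contains at least one `∗`. -/
def hasStar {n : ℕ} (S : FSeq n) : Prop := ∃ i, S i = Letter.star

/-- There is a `1` to the right of the rightmost `∗` (in particular `S` contains a `∗`). -/
def OneRight {n : ℕ} (S : FSeq n) : Prop :=
  hasStar S ∧ ∃ i, S i = Letter.one ∧ ∀ j, i < j → S j ≠ Letter.star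

/-- There is no `1` to the right of the rightmost `∗` (and `S` contains a `∗`). -/
def NoOneRight {n : ℕ} (S : FSeq n) : Prop :=
  hasStar S ∧ ∀ i, S i = Letter.one → ∃ j, i < j ∧ S j = Letter.star

/-- There is a `0` to the left of the leftmost `∗` (in particular `S` contains a `∗`). -/
def ZeroLeft {n : ℕ} (S : FSeq n) : Prop :=
  hasStar S ∧ ∃ i, S i = Letter.zero ∧ ∀ j, j < i → S j ≠ Letter.star

/-- There is no `0` to the left of the leftmost `∗` (and `S` contains a `∗`). -/
def NoZeroLeft {n : ℕ} (S : FSeq n) : Prop :=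
  hasStar S ∧ ∀ i, S i = Letter.zero → ∃ j, j < i ∧ S j = Letter.star

/-- `i` is the position of the rightmost `1` of `S`. -/
def IsRightmostOne {n : ℕ} (S : FSeq n) (i : Fin n) : Prop :=
  S i = Letter.one ∧ ∀ j, i < j → S j ≠ Letter.one

/-- `i` is the position of the rightmost `∗` of `S`. -/
def IsRightmostStar {n : ℕ} (S : FSeq n) (i : Fin n) : Prop :=
  S i = Letter.star ∧ ∀ j, i < j → S j ≠ Letter.star

/-- `i` is the position of the leftmost `0` of `S`. -/
def IsLeftmostZero {n : ℕ} (S : FSeq n) (i : Fin n) : Prop :=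
  S i = Letter.zero ∧ ∀ j, j < i → S j ≠ Letter.zero

/-- `i` is the position of the leftmost `∗` of `S`. -/
def IsLeftmostStar {n : ℕ} (S : FSeq n) (i : Fin n) : Prop :=
  S i = Letter.star ∧ ∀ j, j < i → S j ≠ Letter.star

/-- Condition of rule (1), subcondition (a). -/
def Cond1a {n : ℕ} (k m0 m1 : ℕ) (S : FSeq n) : Prop :=
  count1 S + 1 ≤ k ∧ OneRight S ∧ count1 S ≠ m1

/-- Condition of rule (1), subcondition (b). -/
def Cond1b {n : ℕ} (k m0 m1 : ℕ) (S : FSeq n) : Prop :=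
  count1 S + 1 ≤ k ∧ OneRight S ∧ count1 S = m1 ∧ m0 < count0 S

/-- Condition of rule (1), subcondition (c): no `0` to the left of the leftmost `∗`. -/
def Cond1c {n : ℕ} (k m0 m1 : ℕ) (S : FSeq n) : Prop :=
  count1 S + 1 ≤ k ∧ OneRight S ∧ count1 S = m1 ∧ count0 S = m0 ∧ NoZeroLeft S

/-- Condition of rule (2), subcondition (a): here `count1 S + 1 ≠ m1` encodes `S(1) ≠ m₁ - 1`. -/
def Cond2a {n : ℕ} (k m0 m1 : ℕ) (S : FSeq n) : Prop :=
  count1 S + 2 ≤ k ∧ NoOneRight S ∧ count1 S + 1 ≠ m1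

/-- Condition of rule (2), subcondition (b). -/
def Cond2b {n : ℕ} (k m0 m1 : ℕ) (S : FSeq n) : Prop :=
  count1 S + 2 ≤ k ∧ NoOneRight S ∧ count1 S + 1 = m1 ∧ m0 < count0 S

/-- Condition of rule (2), subcondition (c). -/
def Cond2c {n : ℕ} (k m0 m1 : ℕ) (S : FSeq n) : Prop :=
  count1 S + 2 ≤ k ∧ NoOneRight S ∧ count1 S + 1 = m1 ∧ count0 S = m0 ∧ NoZeroLeft S

/-- `S` is of type 1 (satisfies the condition of rule (1)). -/
def Type1 {n : ℕ} (k m0 m1 : ℕ) (S : FSeq n) : Prop :=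
  Cond1a k m0 m1 S ∨ Cond1b k m0 m1 S ∨ Cond1c k m0 m1 S

/-- `S` is of type 2 (satisfies the condition of rule (2)). -/
def Type2 {n : ℕ} (k m0 m1 : ℕ) (S : FSeq n) : Prop :=
  Cond2a k m0 m1 S ∨ Cond2b k m0 m1 S ∨ Cond2c k m0 m1 S

/-- `S` is of type 3: `S(1) = k-1`, `S(0) ≤ n-k-1`, no `1` right of the rightmost `∗`,
a `0` left of the leftmost `∗`. -/
def Type3 {n : ℕ} (k : ℕ) (S : FSeq n) : Prop :=
  count1 S + 1 = k ∧ count0 S + k + 1 ≤ n ∧ NoOneRight S ∧ ZeroLeft S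

/-- `S` is of type 4: `S(1) = k-1`, `S(0) ≤ n-k-2`, no `1` right of the rightmost `∗`,
no `0` left of the leftmost `∗`. -/
def Type4 {n : ℕ} (k : ℕ) (S : FSeq n) : Prop :=
  count1 S + 1 = k ∧ count0 S + k + 2 ≤ n ∧ NoOneRight S ∧ NoZeroLeft S

/-- `S` is of type 5: `S(1) = m₁`, `S(0) ≤ m₀`, a `1` right of the rightmost `∗`,
a `0` left of the leftmost `∗`. -/
def Type5 {n : ℕ} (m0 m1 : ℕ) (S : FSeq n) : Prop :=
  count1 S = m1 ∧ count0 S ≤ m0 ∧ OneRight S ∧ ZeroLeft S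

/-- `S` is of type 6: `S(1) = m₁`, `S(0) < m₀`, a `1` right of the rightmost `∗`,
no `0` left of the leftmost `∗`. -/
def Type6 {n : ℕ} (m0 m1 : ℕ) (S : FSeq n) : Prop :=
  count1 S = m1 ∧ count0 S < m0 ∧ OneRight S ∧ NoZeroLeft S

/-- `S` is of type 7: `S(1) = m₁-1`, `S(0) ≤ m₀`, no `1` right of the rightmost `∗`,
a `0` left of the leftmost `∗`. -/
def Type7 {n : ℕ} (m0 m1 : ℕ) (S : FSeq n) : Prop :=
  count1 S + 1 = m1 ∧ count0 S ≤ m0 ∧ NoOneRight S ∧ ZeroLeft S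

/-- `S` is of type 8: `S(1) = m₁-1`, `S(0) < m₀`, no `1` right of the rightmost `∗`,
no `0` left of the leftmost `∗`. -/
def Type8 {n : ℕ} (m0 m1 : ℕ) (S : FSeq n) : Prop :=
  count1 S + 1 = m1 ∧ count0 S < m0 ∧ NoOneRight S ∧ NoZeroLeft S

/-- `S` is of type 9: `S(1) = k`, `S(0) = n-k`, and `S ≠ v₀`. -/
def Type9 {n : ℕ} (k : ℕ) (S : FSeq n) : Prop :=
  count1 S = k ∧ count0 S + k = n ∧ S ≠ v0seq n k

/-- `S` is of type 10: `S(1) = k-1`, `S(0) = n-k-1`, no `1` right of the rightmost `∗`,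
no `0` left of the leftmost `∗`. -/
def Type10 {n : ℕ} (k : ℕ) (S : FSeq n) : Prop :=
  count1 S + 1 = k ∧ count0 S + k + 1 = n ∧ NoOneRight S ∧ NoZeroLeft S

/-- `S` is of type `i` for `1 ≤ i ≤ 10` (and of no type otherwise). -/
def OfType {n : ℕ} (k m0 m1 : ℕ) (i : ℕ) (S : FSeq n) : Prop :=
  match i with
  | 1 => Type1 k m0 m1 S
  | 2 => Type2 k m0 m1 S
  | 3 => Type3 k S
  | 4 => Type4 k S
  | 5 => Type5 m0 m1 S
  | 6 => Type6 m0 m1 S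
  | 7 => Type7 m0 m1 S
  | 8 => Type8 m0 m1 S
  | 9 => Type9 k S
  | 10 => Type10 k S
  | _ => False

/-- The replacement of rule (1): replace the rightmost `1` with `∗`. -/
def Apply1 {n : ℕ} (S S' : FSeq n) : Prop :=
  ∃ i, IsRightmostOne S i ∧ S' = Function.update S i Letter.star

/-- The replacement of rule (2): replace the rightmost `∗` with `1`. -/
def Apply2 {n : ℕ} (S S' : FSeq n) : Prop :=
  ∃ i, IsRightmostStar S i ∧ S' = Function.update S i Letter.one

/-- The replacement of rules (3), (5) and (7): replace the leftmost `0` with `∗`. -/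
def Apply3 {n : ℕ} (S S' : FSeq n) : Prop :=
  ∃ i, IsLeftmostZero S i ∧ S' = Function.update S i Letter.star

/-- The replacement of rules (4), (6) and (8): replace the leftmost `∗` with `0`. -/
def Apply4 {n : ℕ} (S S' : FSeq n) : Prop :=
  ∃ i, IsLeftmostStar S i ∧ S' = Function.update S i Letter.zero

/-- The replacement of rule (9): replace the leftmost `0` and the rightmost `1` each with `∗`. -/
def Apply9 {n : ℕ} (S S' : FSeq n) : Prop :=
  ∃ i j, IsLeftmostZero S i ∧ IsRightmostOne S j ∧
    S' = Function.update (Function.update S i Letter.star) j Letter.star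

/-- The replacement of rule (10): replace the leftmost `∗` with `0` and the other `∗` with `1`. -/
def Apply10 {n : ℕ} (S S' : FSeq n) : Prop :=
  ∃ i j, IsLeftmostStar S i ∧ IsRightmostStar S j ∧ i ≠ j ∧
    S' = Function.update (Function.update S i Letter.zero) j Letter.one

/-- The matching `V` on face sequences: a face sequence `S` of type 1, 3, 5, 7 or 9 is
matched with the result `S'` of applying the corresponding rule to it. -/
def Vmatch {n : ℕ} (k m0 m1 : ℕ) (S S' : FSeq n) : Prop :=
  FaceSeq k S ∧
    ((Type1 k m0 m1 S ∧ Apply1 S S') ∨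
     (Type3 k S ∧ Apply3 S S') ∨
     (Type5 m0 m1 S ∧ Apply3 S S') ∨
     (Type7 m0 m1 S ∧ Apply3 S S') ∨
     (Type9 k S ∧ Apply9 S S'))

/-- The vertex set of a face sequence `S`: the vertex sequences (0/1-sequences with
exactly `k` ones) agreeing with `S` wherever `S` is not `∗`. -/
def VertexSet {n : ℕ} (k : ℕ) (S : FSeq n) : Set (FSeq n) :=
  {v | (∀ i, v i ≠ Letter.star) ∧ count1 v = k ∧ ∀ i, S i ≠ Letter.star → v i = S i}

/-- The dimension of the face `F(S)`. -/
def fdim {n : ℕ} (S : FSeq n) : ℕ :=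
  if countStar S = 0 then 0 else countStar S - 1

/-- `T` is a codimension-1 face of `S`. -/
def Codim1 {n : ℕ} (k : ℕ) (T S : FSeq n) : Prop :=
  VertexSet k T ⊂ VertexSet k S ∧ fdim T + 1 = fdim S

/-- A (nontrivial) `V`-path `a₀, b₀, a₁, b₁, …, b_r, a_{r+1}` of face sequences. -/
structure VPath (n k m0 m1 r : ℕ) where
  a : Fin (r + 2) → FSeq n
  b : Fin (r + 1) → FSeq n
  face_a : ∀ i, FaceSeq k (a i)
  face_b : ∀ i, FaceSeq k (b i)
  mem : ∀ i : Fin (r + 1), Vmatch k m0 m1 (a i.castSucc) (b i)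
  codim_left : ∀ i : Fin (r + 1), Codim1 k (a i.castSucc) (b i)
  codim_right : ∀ i : Fin (r + 1), Codim1 k (a i.succ) (b i)
  step_ne : ∀ i : Fin (r + 1), a i.castSucc ≠ a i.succ

/-! Rule (7) turns the leftmost `0` into a `∗`; since a `0` precedes every `∗`, this becomes the
leftmost `∗` and no `0` is left of it, so rule (8) applies and restores the `0`. Conversely,
rule (8) turns the leftmost `∗` into a `0`; since no `0` preceded it, this is the new leftmost `0`,
so rule (7) restores the `∗`. Apart from these positional facts only the counts move: `S(0)`
and the number of `∗`'s change by one, `S(1)` is unchanged. -/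

open Function

theorem Finset.card_filter_update_add {ι α : Type*} [Fintype ι] [DecidableEq ι] [DecidableEq α]
    (f : ι → α) (i : ι) (b l : α) :
    (univ.filter fun j => update f i b j = l).card + (if f i = l then 1 else 0)
      = (univ.filter fun j => f j = l).card + (if b = l then 1 else 0) := by
  simp only [card_filter, ← sum_erase_add _ _ (mem_univ i), update_self]
  rw [sum_congr rfl fun j hj => by rw [update_of_ne (ne_of_mem_erase hj)]]
  ring

section Counting

variable {n : ℕ} {S : FSeq n} {i : Fin n}

theorem count0_add_count1_add_countStar (S : FSeq n) : count0 S + count1 S + countStar S = n := by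
  simp only [count0, count1, countStar, Finset.card_filter, ← Finset.sum_add_distrib]
  rw [Finset.sum_congr rfl fun j _ => by cases S j <;> rfl]
  simp

theorem countStar_pos_iff : 0 < countStar S ↔ hasStar S := by
  simp [countStar, Finset.card_pos, Finset.Nonempty, hasStar]

theorem faceSeq_iff_of_hasStar (k : ℕ) (h : hasStar S) :
    FaceSeq k S ↔ count1 S + 1 ≤ k ∧ k + 1 ≤ count1 S + countStar S := by
  have := countStar_pos_iff.2 h
  unfold FaceSeq
  omega

theorem count0_update_star (h : S i = Letter.zero) :
    count0 (update S i Letter.star) + 1 = count0 S := by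
  simpa [h, count0] using Finset.card_filter_update_add S i Letter.star Letter.zero

theorem count1_update_star (h : S i = Letter.zero) :
    count1 (update S i Letter.star) = count1 S := by
  simpa [h, count1] using Finset.card_filter_update_add S i Letter.star Letter.one

theorem countStar_update_star (h : S i = Letter.zero) :
    countStar (update S i Letter.star) = countStar S + 1 := by
  simpa [h, countStar] using Finset.card_filter_update_add S i Letter.star Letter.star

end Counting

section Positions

variable {n : ℕ} {S : FSeq n} {i : Fin n}

theorem NoOneRight.update_star (h : NoOneRight S) (i : Fin n) :
    NoOneRight (update S i Letter.star) := by
  refine ⟨⟨i, update_self ..⟩, fun j hj => ?_⟩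
  have hji : j ≠ i := by rintro rfl; simp at hj
  obtain ⟨j', hjj', hj'⟩ := h.2 j (by rwa [update_of_ne hji] at hj)
  refine ⟨j', hjj', ?_⟩
  rcases eq_or_ne j' i with rfl | hj'i
  · exact update_self ..
  · rwa [update_of_ne hj'i]

theorem IsLeftmostZero.noZeroLeft_update_star (h : IsLeftmostZero S i) :
    NoZeroLeft (update S i Letter.star) := by
  refine ⟨⟨i, update_self ..⟩, fun j hj => ⟨i, ?_, update_self ..⟩⟩
  have hji : j ≠ i := by rintro rfl; simp at hj
  rw [update_of_ne hji] at hj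
  exact lt_of_le_of_ne (not_lt.1 fun hlt => h.2 j hlt hj) hji.symm

theorem ZeroLeft.isLeftmostStar_update (h : ZeroLeft S) (hi : IsLeftmostZero S i) :
    IsLeftmostStar (update S i Letter.star) i := by
  obtain ⟨-, p, hp, hpL⟩ := h
  have hip : i ≤ p := not_lt.1 fun hpi => hi.2 p hpi hp
  refine ⟨update_self .., fun j hji => ?_⟩
  rw [update_of_ne hji.ne]
  exact hpL j (hji.trans_le hip)

theorem IsLeftmostStar.lt_of_update_zero (h : IsLeftmostStar S i) {s : Fin n}
    (hs : update S i Letter.zero s = Letter.star) : i < s := by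
  have hsi : s ≠ i := by rintro rfl; simp at hs
  rw [update_of_ne hsi] at hs
  exact lt_of_le_of_ne (not_lt.1 fun hlt => h.2 s hlt hs) hsi.symm

theorem NoOneRight.update_zero (h : NoOneRight S) (hi : IsLeftmostStar S i)
    (hstar : hasStar (update S i Letter.zero)) : NoOneRight (update S i Letter.zero) := by
  obtain ⟨s, hs⟩ := hstar
  refine ⟨⟨s, hs⟩, fun j hj => ?_⟩
  have hji : j ≠ i := by rintro rfl; simp at hj
  obtain ⟨j', hjj', hj'⟩ := h.2 j (by rwa [update_of_ne hji] at hj)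
  rcases eq_or_ne j' i with rfl | hj'i
  · exact ⟨s, hjj'.trans (hi.lt_of_update_zero hs), hs⟩
  · exact ⟨j', hjj', by rwa [update_of_ne hj'i]⟩

theorem IsLeftmostStar.zeroLeft_update_zero (h : IsLeftmostStar S i)
    (hstar : hasStar (update S i Letter.zero)) : ZeroLeft (update S i Letter.zero) := by
  refine ⟨hstar, i, update_self .., fun j hji => ?_⟩
  rw [update_of_ne hji.ne]
  exact h.2 j hji

theorem NoZeroLeft.isLeftmostZero_update (h : NoZeroLeft S) (hi : IsLeftmostStar S i) :
    IsLeftmostZero (update S i Letter.zero) i := by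
  refine ⟨update_self .., fun j hji hj => ?_⟩
  rw [update_of_ne hji.ne] at hj
  obtain ⟨j', hj'j, hj'⟩ := h.2 j hj
  exact hi.2 j' (hj'j.trans hji) hj'

end Positions

section Rules

variable {n k m0 m1 : ℕ} {S : FSeq n} {i : Fin n}

theorem Type7.apply3 (hS : FaceSeq k S) (h7 : Type7 m0 m1 S) (hi : IsLeftmostZero S i) :
    FaceSeq k (update S i Letter.star) ∧ Type8 m0 m1 (update S i Letter.star) ∧
      Apply4 (update S i Letter.star) S := by
  obtain ⟨h1, h0, hNOR, hZL⟩ := h7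
  have c0 := count0_update_star hi.1
  have c1 := count1_update_star hi.1
  have cs := countStar_update_star hi.1
  rw [faceSeq_iff_of_hasStar k hNOR.1] at hS
  refine ⟨(faceSeq_iff_of_hasStar k ⟨i, update_self ..⟩).2 (by omega),
    ⟨by omega, by omega, hNOR.update_star i, hi.noZeroLeft_update_star⟩,
    i, hZL.isLeftmostStar_update hi, ?_⟩
  rw [update_idem, eq_comm, update_eq_self_iff, hi.1]

/-- A second `∗` survives rule (8): `S(0) < m₀ ≤ n - k - 1` leaves at least `k + 2` ones and
`∗`'s in `S`. -/
theorem Type8.apply4 (hm0 : m0 + k + 1 ≤ n) (hS : FaceSeq k S) (h8 : Type8 m0 m1 S)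
    (hi : IsLeftmostStar S i) :
    FaceSeq k (update S i Letter.zero) ∧ Type7 m0 m1 (update S i Letter.zero) ∧
      Apply3 (update S i Letter.zero) S := by
  obtain ⟨h1, h0, hNOR, hNZL⟩ := h8
  have hS' : update (update S i Letter.zero) i Letter.star = S := by
    rw [update_idem, update_eq_self_iff, hi.1]
  have hi0 : update S i Letter.zero i = Letter.zero := update_self ..
  have c0 := count0_update_star hi0
  have c1 := count1_update_star hi0
  have cs := countStar_update_star hi0
  rw [hS'] at c0 c1 cs
  have htot := count0_add_count1_add_countStar S
  rw [faceSeq_iff_of_hasStar k hNOR.1] at hS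
  have hstar : hasStar (update S i Letter.zero) := countStar_pos_iff.1 (by omega)
  refine ⟨(faceSeq_iff_of_hasStar k hstar).2 (by omega),
    ⟨by omega, by omega, hNOR.update_zero hi hstar, hi.zeroLeft_update_zero hstar⟩,
    i, hNZL.isLeftmostZero_update hi, hS'.symm⟩

end Rules

theorem rule7_rule8_inverse_general (n k m0 m1 : ℕ) (hm0 : m0 + k + 1 ≤ n) :
    (∀ S S' : FSeq n, FaceSeq k S → Type7 m0 m1 S → Apply3 S S' →
      FaceSeq k S' ∧ Type8 m0 m1 S' ∧ Apply4 S' S) ∧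
    (∀ T T' : FSeq n, FaceSeq k T → Type8 m0 m1 T → Apply4 T T' →
      FaceSeq k T' ∧ Type7 m0 m1 T' ∧ Apply3 T' T) :=
  ⟨fun _ _ hS h7 ⟨_, hi, hS'⟩ => hS' ▸ Type7.apply3 hS h7 hi,
    fun _ _ hT h8 ⟨_, hi, hT'⟩ => hT' ▸ Type8.apply4 hm0 hT h8 hi⟩

/-- **Rules (7) and (8) are inverses of each other.** -/
theorem rule7_rule8_inverse (n k m0 m1 : ℕ) (hk1 : 1 ≤ k) (hk2 : k ≤ n - 1)
    (hm0 : m0 + k + 1 ≤ n) (hm1l : 1 ≤ m1) (hm1u : m1 + 1 ≤ k) :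
    (∀ S S' : FSeq n, FaceSeq k S → Type7 m0 m1 S → Apply3 S S' →
      FaceSeq k S' ∧ Type8 m0 m1 S' ∧ Apply4 S' S) ∧
    (∀ T T' : FSeq n, FaceSeq k T → Type8 m0 m1 T → Apply4 T T' →
      FaceSeq k T' ∧ Type7 m0 m1 T' ∧ Apply3 T' T) :=
  rule7_rule8_inverse_general n k m0 m1 hm0
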